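/- Let Z = [B A]Γ with Γ ∈ ℝ^{(m+n)×T} full row rank, and let Γ_Δ = Γ + Δ_Γ. If G satisfies Γ_Δ G = [Kᵀ I_n]ᵀ (stacking K ∈ ℝ^{m×n} above I_n), then A + BK = Z(I + Γ†Δ_Γ)G, where Γ† is the Moore–Penrose pseudoinverse of Γ. -/

import Mathlib

/-!
Full row rank makes `Γ Γᵀ` invertible, so `Γ† = Γᵀ (Γ Γᵀ)⁻¹` is a right inverse of `Γ`.
Hence `Γ (I + Γ† Δ_Γ) = Γ + Δ_Γ = Γ_Δ`, and the right-hand side collapses to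
`[B A] Γ_Δ G = [B A] [Kᵀ I]ᵀ = B K + A`.
-/

open Matrix

namespace Matrix

theorem isUnit_of_rank_eq_card {ι K : Type*} [Fintype ι] [DecidableEq ι] [Field K]
    (M : Matrix ι ι K) (h : M.rank = Fintype.card ι) : IsUnit M := by
  rw [← mulVec_surjective_iff_isUnit]
  have hrange : LinearMap.range M.mulVecLin = ⊤ :=
    Submodule.eq_top_of_finrank_eq (by rw [← rank, h, Module.finrank_fintype_fun_eq_card])
  exact LinearMap.range_eq_top.mp hrange

theorem isUnit_mul_transpose_of_rank_eq_card {ι κ K : Type*} [Fintype ι] [DecidableEq ι]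
    [Fintype κ] [Field K] [LinearOrder K] [IsStrictOrderedRing K]
    (Γ : Matrix ι κ K) (h : Γ.rank = Fintype.card ι) : IsUnit (Γ * Γᵀ) :=
  isUnit_of_rank_eq_card _ (by rw [rank_self_mul_transpose, h])

theorem mul_transpose_mul_inv_of_rank_eq_card {ι κ K : Type*} [Fintype ι] [DecidableEq ι]
    [Fintype κ] [Field K] [LinearOrder K] [IsStrictOrderedRing K]
    (Γ : Matrix ι κ K) (h : Γ.rank = Fintype.card ι) : Γ * (Γᵀ * (Γ * Γᵀ)⁻¹) = 1 := by
  rw [← Matrix.mul_assoc, mul_nonsing_inv _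
    ((isUnit_iff_isUnit_det _).mp (isUnit_mul_transpose_of_rank_eq_card Γ h))]

theorem mul_one_add_mul_of_mul_eq_one {l m α : Type*} [Fintype l] [Fintype m]
    [DecidableEq l] [DecidableEq m] [Semiring α] {Γ : Matrix l m α} {R : Matrix m l α}
    (hR : Γ * R = 1) (Δ : Matrix l m α) :
    Γ * (1 + R * Δ) = Γ + Δ := by
  rw [Matrix.mul_add, Matrix.mul_one, ← Matrix.mul_assoc, hR, Matrix.one_mul]

end Matrix

/-- If `Z = [B A]Γ` with `Γ` full row rank, `Γ_Δ = Γ + Δ_Γ`, and `G` satisfies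
`Γ_Δ G = [Kᵀ I]ᵀ`, then `A + BK = Z(I + Γ†Δ_Γ)G` with `Γ† = Γᵀ(ΓΓᵀ)⁻¹`. -/
theorem stmt_10 {n m T : ℕ}
    (A : Matrix (Fin n) (Fin n) ℝ) (B : Matrix (Fin n) (Fin m) ℝ)
    (Γ ΔΓ : Matrix (Fin m ⊕ Fin n) (Fin T) ℝ)
    (hrank : Γ.rank = m + n)
    (G : Matrix (Fin T) (Fin n) ℝ) (K : Matrix (Fin m) (Fin n) ℝ)
    (hG : (Γ + ΔΓ) * G = Matrix.fromRows K (1 : Matrix (Fin n) (Fin n) ℝ)) :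
    A + B * K = Matrix.fromCols B A * Γ * (1 + Γᵀ * (Γ * Γᵀ)⁻¹ * ΔΓ) * G := by
  have hright : Γ * (Γᵀ * (Γ * Γᵀ)⁻¹) = 1 :=
    mul_transpose_mul_inv_of_rank_eq_card Γ (by simp [hrank])
  calc A + B * K = fromCols B A * fromRows K (1 : Matrix (Fin n) (Fin n) ℝ) := by
        rw [fromCols_mul_fromRows, Matrix.mul_one, add_comm]
    _ = fromCols B A * (Γ * (1 + Γᵀ * (Γ * Γᵀ)⁻¹ * ΔΓ)) * G := by
        rw [mul_one_add_mul_of_mul_eq_one hright, ← hG, Matrix.mul_assoc]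
    _ = fromCols B A * Γ * (1 + Γᵀ * (Γ * Γᵀ)⁻¹ * ΔΓ) * G := by rw [Matrix.mul_assoc _ Γ]
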